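/- Let p ∈ ℤ be a prime number. If p ∣ d, then there exists exactly one ideal 𝔞 of 𝒪_D of norm p, and it satisfies 𝔞^σ = 𝔞 (where 𝔞^σ denotes the image of 𝔞 under the conjugation σ). If p ∤ d, then there exist exactly two distinct ideals 𝔞 ≠ 𝔟 of 𝒪_D of norm p, and they satisfy 𝔞^σ = 𝔟. -/

import Mathlib

/-- The quadratic order `𝒪_D` of square discriminant `D = d²`,
realized as the subring `{(x,y) ∈ ℤ × ℤ : x ≡ y (mod d)}` of `ℤ × ℤ`. -/
def Od (d : ℤ) : Subring (ℤ × ℤ) where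
  carrier := {z | d ∣ z.1 - z.2}
  one_mem' := by simp
  zero_mem' := by simp
  mul_mem' := by
    rintro a b ha hb
    show d ∣ a.1 * b.1 - a.2 * b.2
    have h : a.1 * b.1 - a.2 * b.2 = (a.1 - a.2) * b.1 + a.2 * (b.1 - b.2) := by ring
    rw [h]
    exact dvd_add (ha.mul_right b.1) (hb.mul_left a.2)
  add_mem' := by
    rintro a b ha hb
    show d ∣ a.1 + b.1 - (a.2 + b.2)
    have h : a.1 + b.1 - (a.2 + b.2) = (a.1 - a.2) + (b.1 - b.2) := by ring
    rw [h]
    exact dvd_add ha hb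
  neg_mem' := by
    rintro a ha
    show d ∣ -a.1 - -a.2
    have h : -a.1 - -a.2 = -(a.1 - a.2) := by ring
    rw [h]
    exact ha.neg_right

lemma mem_Od {d : ℤ} {z : ℤ × ℤ} : z ∈ Od d ↔ d ∣ z.1 - z.2 := Iff.rfl

/-- The element `w = (0, d)` of the standard basis of `𝒪_D`. -/
def wd (d : ℤ) : Od d := ⟨(0, d), mem_Od.mpr ⟨-1, by ring⟩⟩


/-- The Galois conjugation `σ(x,y) = (y,x)` of `𝒪_D`, as a ring homomorphism. -/
def sw (d : ℤ) : Od d →+* Od d where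
  toFun z := ⟨((z : ℤ × ℤ).2, (z : ℤ × ℤ).1), mem_Od.mpr (dvd_sub_comm.mp z.2)⟩
  map_one' := Subtype.ext rfl
  map_mul' := fun _ _ => Subtype.ext rfl
  map_zero' := Subtype.ext rfl
  map_add' := fun _ _ => Subtype.ext rfl

/-! The elements `1` and `w = (0, d)` form a `ℤ`-basis of `𝒪_D`, and `w² = d • w`, so a ring
hom from `𝒪_D` to a domain sends `w` to `0` or to `d` and is therefore one of the two coordinate
projections. A ring with `p` elements is `ℤ/p`, so the ideals of norm `p` are exactly the kernels
of the two projections reduced mod `p`. The conjugation `σ` interchanges them, and they coincide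
exactly when `p ∣ d`, as `w` lies in the first one and is sent to `d` by the second. -/

namespace Ideal

variable {A : Type*} [CommRing A]

theorem card_quotient_ker_of_surjective {B : Type*} [Ring B] {f : A →+* B}
    (hf : Function.Surjective f) : Nat.card (A ⧸ RingHom.ker f) = Nat.card B :=
  Nat.card_congr (RingHom.quotientKerEquivOfSurjective hf).toEquiv

theorem exists_ker_eq_of_card_quotient_eq_prime {I : Ideal A} {p : ℕ} (hp : p.Prime)
    (hI : Nat.card (A ⧸ I) = p) : ∃ g : A →+* ZMod p, RingHom.ker g = I := by
  have : Finite (A ⧸ I) := Nat.finite_of_card_ne_zero (hI ▸ hp.ne_zero)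
  let _ := Fintype.ofFinite (A ⧸ I)
  let e := ZMod.ringEquivOfPrime (A ⧸ I) hp (Nat.card_eq_fintype_card.symm.trans hI)
  refine ⟨e.symm.toRingHom.comp (Quotient.mk I), ?_⟩
  rw [RingHom.ker_comp_of_injective _ e.symm.injective, mk_ker]

end Ideal

namespace Od

variable (d : ℤ)

def fst : Od d →+* ℤ := (RingHom.fst ℤ ℤ).comp (Od d).subtype

def snd : Od d →+* ℤ := (RingHom.snd ℤ ℤ).comp (Od d).subtype

theorem eq_add_smul_wd (z : Od d) : ∃ k : ℤ, z = (fst d z : Od d) + k • wd d := by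
  obtain ⟨k, hk⟩ := dvd_sub_comm.mp z.2
  refine ⟨k, Subtype.ext (Prod.ext ?_ ?_)⟩
  · simp [fst, wd]
  · simp [fst, wd]
    linarith

theorem wd_mul_wd : wd d * wd d = (d : Od d) * wd d :=
  Subtype.ext (Prod.ext (by simp [wd]) (by simp [wd]))

theorem eq_fst_or_snd {R : Type*} [CommRing R] [NoZeroDivisors R] (g : Od d →+* R) :
    g = (Int.castRingHom R).comp (fst d) ∨ g = (Int.castRingHom R).comp (snd d) := by
  have hg : ∀ z : Od d, ∃ k : ℤ, g z = fst d z + k • g (wd d) ∧ snd d z = fst d z + k * d := by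
    intro z
    obtain ⟨k, hk⟩ := eq_add_smul_wd d z
    refine ⟨k, ?_, ?_⟩
    · conv_lhs => rw [hk]
      rw [map_add, map_zsmul, map_intCast]
    · conv_lhs => rw [hk]
      simp [snd, wd]
  have hw : g (wd d) * (g (wd d) - d) = 0 := by
    rw [mul_sub, ← map_mul, wd_mul_wd, map_mul, map_intCast, mul_comm, sub_self]
  rcases mul_eq_zero.mp hw with h | h
  · refine .inl (RingHom.ext fun z => ?_)
    obtain ⟨k, hgz, -⟩ := hg z
    simp [hgz, h]
  · refine .inr (RingHom.ext fun z => ?_)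
    obtain ⟨k, hgz, hsnd⟩ := hg z
    simp [hgz, sub_eq_zero.mp h, hsnd]

variable (p : ℕ)

def fstMod : Od d →+* ZMod p := (Int.castRingHom (ZMod p)).comp (fst d)

def sndMod : Od d →+* ZMod p := (Int.castRingHom (ZMod p)).comp (snd d)

theorem fstMod_surjective : Function.Surjective (fstMod d p) := fun c =>
  (ZMod.intCast_surjective c).imp' (fun n : ℤ => (n : Od d)) fun n hn => by simp [fstMod, hn]

theorem sndMod_surjective : Function.Surjective (sndMod d p) := fun c =>
  (ZMod.intCast_surjective c).imp' (fun n : ℤ => (n : Od d)) fun n hn => by simp [sndMod, hn]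

theorem card_quotient_ker_fstMod : Nat.card (Od d ⧸ RingHom.ker (fstMod d p)) = p := by
  rw [Ideal.card_quotient_ker_of_surjective (fstMod_surjective d p), Nat.card_zmod]

theorem card_quotient_ker_sndMod : Nat.card (Od d ⧸ RingHom.ker (sndMod d p)) = p := by
  rw [Ideal.card_quotient_ker_of_surjective (sndMod_surjective d p), Nat.card_zmod]

theorem sndMod_comp_sw : (sndMod d p).comp (sw d) = fstMod d p := rfl

theorem sw_surjective : Function.Surjective (sw d) := fun z => ⟨sw d z, rfl⟩

theorem map_sw_ker_fstMod :
    Ideal.map (sw d) (RingHom.ker (fstMod d p)) = RingHom.ker (sndMod d p) := by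
  rw [← sndMod_comp_sw, ← RingHom.comap_ker,
    Ideal.map_comap_of_surjective _ (sw_surjective d)]

theorem ker_fstMod_eq_ker_sndMod_iff :
    RingHom.ker (fstMod d p) = RingHom.ker (sndMod d p) ↔ (p : ℤ) ∣ d := by
  constructor
  · intro h
    have hw : wd d ∈ RingHom.ker (sndMod d p) := h ▸ by simp [fstMod, fst, wd]
    simpa [sndMod, snd, wd, ZMod.intCast_zmod_eq_zero_iff_dvd] using hw
  · intro h
    congr 1
    ext z
    exact (ZMod.intCast_eq_intCast_iff_dvd_sub _ _ _).mpr (h.trans (dvd_sub_comm.mp z.2))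

theorem eq_ker_fstMod_or_sndMod_of_card (hp : p.Prime) {C : Ideal (Od d)}
    (hC : Nat.card (Od d ⧸ C) = p) :
    C = RingHom.ker (fstMod d p) ∨ C = RingHom.ker (sndMod d p) := by
  have := Fact.mk hp
  obtain ⟨g, rfl⟩ := Ideal.exists_ker_eq_of_card_quotient_eq_prime hp hC
  rcases eq_fst_or_snd d g with rfl | rfl
  exacts [.inl rfl, .inr rfl]

end Od

open Od in
theorem count_ideals_of_prime_norm_general (d : ℤ) (p : ℕ) (hp : p.Prime) :
    ((p : ℤ) ∣ d →
      ∃ A : Ideal (Od d), Nat.card (Od d ⧸ A) = p ∧ Ideal.map (sw d) A = A ∧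
        ∀ B : Ideal (Od d), Nat.card (Od d ⧸ B) = p → B = A) ∧
    (¬ (p : ℤ) ∣ d →
      ∃ A B : Ideal (Od d), A ≠ B ∧
        Nat.card (Od d ⧸ A) = p ∧ Nat.card (Od d ⧸ B) = p ∧
        Ideal.map (sw d) A = B ∧
        ∀ C : Ideal (Od d), Nat.card (Od d ⧸ C) = p → C = A ∨ C = B) := by
  constructor
  · intro hpd
    have hker := (ker_fstMod_eq_ker_sndMod_iff d p).mpr hpd
    refine ⟨_, card_quotient_ker_fstMod d p, by rw [map_sw_ker_fstMod, hker], fun B hB => ?_⟩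
    rcases eq_ker_fstMod_or_sndMod_of_card d p hp hB with h | h
    exacts [h, h.trans hker.symm]
  · intro hpd
    exact ⟨_, _, mt (ker_fstMod_eq_ker_sndMod_iff d p).mp hpd, card_quotient_ker_fstMod d p,
      card_quotient_ker_sndMod d p, map_sw_ker_fstMod d p,
      fun C hC => eq_ker_fstMod_or_sndMod_of_card d p hp hC⟩

/-- Theorem A.9: for a prime `p`, if `p ∣ d` there is exactly one ideal `𝔞`
of `𝒪_D` of norm `p` and it satisfies `𝔞^σ = 𝔞`; if `p ∤ d` there are exactly two distinct
ideals of norm `p`, interchanged by `σ`. -/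
theorem count_ideals_of_prime_norm (d : ℤ) (hd : 1 ≤ d) (p : ℕ) (hp : p.Prime) :
    ((p : ℤ) ∣ d →
      ∃ A : Ideal (Od d), Nat.card (Od d ⧸ A) = p ∧ Ideal.map (sw d) A = A ∧
        ∀ B : Ideal (Od d), Nat.card (Od d ⧸ B) = p → B = A) ∧
    (¬ (p : ℤ) ∣ d →
      ∃ A B : Ideal (Od d), A ≠ B ∧
        Nat.card (Od d ⧸ A) = p ∧ Nat.card (Od d ⧸ B) = p ∧
        Ideal.map (sw d) A = B ∧
        ∀ C : Ideal (Od d), Nat.card (Od d ⧸ C) = p → C = A ∨ C = B) :=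
  count_ideals_of_prime_norm_general d p hp
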